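/- For any plan π = (a₁,...,aₙ) applicable from initial state I, the true plan disruption is bounded by the eager approximation: |I △ Γ(I,π)| ≤ Σᵢ |(add(aᵢ) \ (add(aᵢ) ∩ I)) ∪ (del(aᵢ) ∩ I)|, where Γ(I,π) is the state reached after executing π from I. -/
import Mathlib


/-- A STRIPS action: positive/negative preconditions and add/delete effects. -/
structure SAction (α : Type*) [DecidableEq α] where
  prePos : Finset α
  preNeg : Finset α
  add : Finset α
  del : Finset α

variable {α : Type*} [DecidableEq α]

/-- Result of applying action `a` in state `s`: γ(s,a) = (s \ del(a)) ∪ add(a). -/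
def applyAct (s : Finset α) (a : SAction α) : Finset α := (s \ a.del) ∪ a.add

/-- State reached after executing an action sequence from `s`. -/
def runPlan (s : Finset α) (π : List (SAction α)) : Finset α := π.foldl applyAct s

/-- The action sequence is applicable from `s`. -/
def AppSeq (s : Finset α) : List (SAction α) → Prop
  | [] => True
  | a :: π => a.prePos ⊆ s ∧ Disjoint a.preNeg s ∧ AppSeq (applyAct s a) π

lemma step_subset (I s : Finset α) (a : SAction α) :
    symmDiff I (applyAct s a) ⊆ symmDiff I s ∪ ((a.add \ (a.add ∩ I)) ∪ (a.del ∩ I)) := by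
  intro x hx
  simp only [Finset.mem_symmDiff, applyAct, Finset.mem_union, Finset.mem_sdiff,
    Finset.mem_inter] at hx ⊢
  rcases hx with ⟨hI, hn⟩ | ⟨h, hnI⟩
  · push_neg at hn
    by_cases hs : x ∈ s
    · exact Or.inr (Or.inr ⟨(hn.1 hs), hI⟩)
    · exact Or.inl (Or.inl ⟨hI, hs⟩)
  · rcases h with ⟨hs, _⟩ | hadd
    · exact Or.inl (Or.inr ⟨hs, hnI⟩)
    · exact Or.inr (Or.inl ⟨hadd, fun h => hnI h.2⟩)

lemma aux (I : Finset α) (π : List (SAction α)) : ∀ s : Finset α,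
    (symmDiff I (runPlan s π)).card ≤
      (symmDiff I s).card +
        (π.map (fun a => ((a.add \ (a.add ∩ I)) ∪ (a.del ∩ I)).card)).sum := by
  induction π with
  | nil => intro s; simp [runPlan]
  | cons a π ih =>
    intro s
    have h1 : (symmDiff I (runPlan (applyAct s a) π)).card ≤
        (symmDiff I (applyAct s a)).card +
          (π.map (fun a => ((a.add \ (a.add ∩ I)) ∪ (a.del ∩ I)).card)).sum := ih _
    have h2 : (symmDiff I (applyAct s a)).card ≤
        (symmDiff I s).card + ((a.add \ (a.add ∩ I)) ∪ (a.del ∩ I)).card :=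
      (Finset.card_le_card (step_subset I s a)).trans (Finset.card_union_le _ _)
    simp only [runPlan, List.foldl_cons, List.map_cons, List.sum_cons] at *
    omega

theorem lazy_le_eager (I : Finset α) (π : List (SAction α))
    (hdisj : ∀ a ∈ π, Disjoint a.add a.del)
    (happ : AppSeq I π) :
    (symmDiff I (runPlan I π)).card ≤
      (π.map (fun a => ((a.add \ (a.add ∩ I)) ∪ (a.del ∩ I)).card)).sum := by
  have := aux I π I
  simpa using this
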